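/- Let X be a smooth connected complete variety of dimension m over an infinite field k. If X is stably rational, i.e. there exists a ≥ 0 such that X × ℙᵃ_k is birational to ℙ^{m+a}_k over k, then X has a k-rational point. -/

import Mathlib

open AlgebraicGeometry CategoryTheory CategoryTheory.Limits MvPolynomial

universe u v

noncomputable section

attribute [local instance] MvPolynomial.gradedAlgebra

/-- The base scheme `Spec k`. -/
abbrev SpecBase (k : Type u) [Field k] : Scheme.{u} := Spec (CommRingCat.of k)

/-- The affine line `𝔸¹_k` as a scheme over `k`. -/
def AffineLine (k : Type u) [Field k] : Scheme.{u} := Spec (CommRingCat.of (Polynomial k))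

/-- The structure morphism of `𝔸¹_k`. -/
def AffineLine.toSpec (k : Type u) [Field k] : AffineLine k ⟶ SpecBase k :=
  Spec.map (CommRingCat.ofHom (algebraMap k (Polynomial k)))

/-- Projective `n`-space `ℙⁿ_k = Proj k[x₀, …, xₙ]` over `k`. -/
def ProjSpace (k : Type u) [Field k] (n : ℕ) : Scheme.{u} :=
  Proj (homogeneousSubmodule (Fin (n + 1)) k)

/-- The structure morphism of `ℙⁿ_k`. -/
def ProjSpace.toSpec (k : Type u) [Field k] (n : ℕ) : ProjSpace k n ⟶ SpecBase k :=
  Proj.toSpecZero _ ≫ Spec.map (CommRingCat.ofHom (algebraMap k _))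

/-- `X` (a scheme over `k` via `sX : X ⟶ Spec k`) is the reduced closed subvariety of `ℙⁿ_k`
cut out by the family `S` of polynomials, i.e. `X → ℙⁿ_k` is a closed immersion of the reduced
scheme `X` onto the zero locus of `S`, compatibly with the structure morphisms. -/
def IsProjSubvariety (k : Type u) [Field k] (n : ℕ) (S : Set (MvPolynomial (Fin (n + 1)) k))
    (X : Scheme.{u}) (sX : X ⟶ SpecBase k) : Prop :=
  IsReduced X ∧ ∃ i : X ⟶ ProjSpace k n, IsClosedImmersion i ∧ i ≫ ProjSpace.toSpec k n = sX ∧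
    Set.range i.base = ProjectiveSpectrum.zeroLocus (homogeneousSubmodule (Fin (n + 1)) k) S

/-- `X` has a `k`-rational point, i.e. the structure morphism has a section. -/
def HasRatPoint (k : Type u) [Field k] (X : Scheme.{u}) (sX : X ⟶ SpecBase k) : Prop :=
  ∃ p : SpecBase k ⟶ X, p ≫ sX = 𝟙 (SpecBase k)

/-- A motivic measure on varieties over `k` with values in a commutative ring `R`: an
assignment, to every scheme over `k`, of an element of `R` which, on separated schemes of
finite type over `k` (i.e. on the category `Var_k`, reducedness being irrelevant), is
invariant under isomorphisms over `k`, satisfies the scissor relations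
`[X] = [X ∖ Z] + [Z]` for closed subschemes `Z ⊆ X`, is multiplicative on fibre products
over `k`, and sends `Spec k` to `1`.  These are exactly the defining relations of the
Grothendieck ring of varieties `K₀(Var_k)`, so an identity holds in `K₀(Var_k)` if and
only if it holds for every motivic measure. -/
structure MotivicMeasure (k : Type u) [Field k] (R : Type v) [CommRing R] where
  cl : ∀ (X : Scheme.{u}), (X ⟶ SpecBase k) → R
  cl_point : cl (SpecBase k) (𝟙 (SpecBase k)) = 1
  cl_iso : ∀ {X Y : Scheme.{u}} (sX : X ⟶ SpecBase k) (sY : Y ⟶ SpecBase k) (e : X ≅ Y),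
    LocallyOfFiniteType sX → QuasiCompact sX → IsSeparated sX →
    e.hom ≫ sY = sX → cl X sX = cl Y sY
  cl_scissor : ∀ {X Z : Scheme.{u}} (sX : X ⟶ SpecBase k) (i : Z ⟶ X),
    LocallyOfFiniteType sX → QuasiCompact sX → IsSeparated sX →
    IsClosedImmersion i → ∀ U : X.Opens, (U : Set X) = (Set.range i.base)ᶜ →
    cl X sX = cl U.toScheme (U.ι ≫ sX) + cl Z (i ≫ sX)
  cl_prod : ∀ {X Y : Scheme.{u}} (sX : X ⟶ SpecBase k) (sY : Y ⟶ SpecBase k),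
    LocallyOfFiniteType sX → QuasiCompact sX → IsSeparated sX →
    LocallyOfFiniteType sY → QuasiCompact sY → IsSeparated sY →
    cl (pullback sX sY) (pullback.fst sX sY ≫ sX) = cl X sX * cl Y sY

/-- The class of the affine line, `𝕃 = [𝔸¹_k]`, under a motivic measure. -/
def MotivicMeasure.lef {k : Type u} [Field k] {R : Type v} [CommRing R]
    (μ : MotivicMeasure k R) : R :=
  μ.cl (AffineLine k) (AffineLine.toSpec k)

/-- `X` and `Y` are birational over `k`: they contain isomorphic dense open subschemes. -/
def BirationalOver (k : Type u) [Field k] (X Y : Scheme.{u})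
    (sX : X ⟶ SpecBase k) (sY : Y ⟶ SpecBase k) : Prop :=
  ∃ (U : X.Opens) (V : Y.Opens) (e : U.toScheme ≅ V.toScheme),
    Dense (U : Set X) ∧ Dense (V : Set Y) ∧ e.hom ≫ V.ι ≫ sY = U.ι ≫ sX

end

/-!
Over an infinite field every dense open subset of `ℙᴺ_k` has a `k`-point: it contains a basic
open `D(g)` of the chart `x₀ ≠ 0`, and a point `b ∈ kᴺ⁺¹` at which the nonzero polynomial
`x₀ · num(g)` does not vanish is a `k`-point of `D(g)`. A birational equivalence of
`X ×_k ℙᵃ_k` with `ℙᵐ⁺ᵃ_k` carries such a point into `X ×_k ℙᵃ_k`, and projecting gives a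
`k`-point of `X`.
-/

namespace HomogeneousLocalization

variable {ι A σ R : Type*} [CommRing A] [SetLike σ A] [AddSubgroupClass σ A] [AddCommMonoid ι]
  [DecidableEq ι] {𝒜 : ι → σ} [GradedRing 𝒜] [CommRing R] (g : A →+* R) (f : A)
  (hf : IsUnit (g f))

noncomputable def Away.lift : Away 𝒜 f →+* R :=
  (Localization.awayLift g f hf).comp (algebraMap (Away 𝒜 f) (Localization.Away f))

lemma Away.lift_mk_mul_den (c : NumDenSameDeg 𝒜 (.powers f)) :
    Away.lift g f hf (mk c) * g c.den = g c.num := by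
  have hspec := congrArg (Localization.awayLift g f hf)
    (IsLocalization.mk'_spec (Localization.Away f) (c.num : A) ⟨c.den, c.den_mem⟩)
  rw [map_mul, IsLocalization.Away.lift_eq, IsLocalization.Away.lift_eq] at hspec
  rw [← hspec]
  simp [Away.lift, Localization.mk_eq_mk']

lemma Away.lift_fromZeroRingHom (a : 𝒜 0) :
    Away.lift g f hf (fromZeroRingHom 𝒜 _ a) = g a := by
  show Away.lift g f hf (mk ⟨0, a, 1, one_mem _⟩) = g a
  simpa using Away.lift_mk_mul_den g f hf ⟨0, a, 1, one_mem _⟩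

end HomogeneousLocalization

lemma MvPolynomial.exists_eval_ne_zero {R σ : Type*} [CommRing R] [IsDomain R] [Infinite R]
    {p : MvPolynomial σ R} (hp : p ≠ 0) : ∃ b, eval b p ≠ 0 := by
  by_contra! h
  exact hp (MvPolynomial.funext fun b => by simpa using h b)

lemma AlgebraicGeometry.Spec_map_base_mem_basicOpen {R K : Type u} [CommRing R] [Field K]
    (φ : R →+* K) (pt : Spec (CommRingCat.of K)) {a : R} (ha : φ a ≠ 0) :
    (Spec.map (CommRingCat.ofHom φ)).base pt ∈ PrimeSpectrum.basicOpen a :=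
  fun h => pt.isPrime.ne_top (Ideal.eq_top_of_isUnit_mem _ h (isUnit_iff_ne_zero.2 ha))

lemma HasRatPoint.of_hom {k : Type u} [Field k] {X Y : Scheme.{u}} {sX : X ⟶ SpecBase k}
    {sY : Y ⟶ SpecBase k} (h : HasRatPoint k Y sY) (f : Y ⟶ X) (hf : f ≫ sX = sY) :
    HasRatPoint k X sX :=
  let ⟨p, hp⟩ := h
  ⟨p ≫ f, by rw [Category.assoc, hf, hp]⟩

namespace ProjSpace

attribute [local instance] MvPolynomial.gradedAlgebra

variable {k : Type u} [Field k] {n : ℕ}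

local notation "𝒜" => homogeneousSubmodule (Fin (n + 1)) k

lemma X_mem_degree_one (i : Fin (n + 1)) : (X i : MvPolynomial (Fin (n + 1)) k) ∈ 𝒜 1 :=
  (mem_homogeneousSubmodule _ _).2 (isHomogeneous_X _ _)

noncomputable abbrev chart (i : Fin (n + 1)) :
    Spec (.of (HomogeneousLocalization.Away 𝒜 (X i))) ⟶ ProjSpace k n :=
  Proj.awayι 𝒜 (X i) (X_mem_degree_one i) one_pos

instance (i : Fin (n + 1)) : IsOpenImmersion (chart (k := k) i) :=
  inferInstanceAs (IsOpenImmersion (Proj.awayι _ _ _ _))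

/-- The `k`-point `(b₀ : ⋯ : bₙ)`, seen in the chart `{xᵢ ≠ 0}`. -/
noncomputable def ratPoint (b : Fin (n + 1) → k) (i : Fin (n + 1)) (hb : b i ≠ 0) :
    SpecBase k ⟶ ProjSpace k n :=
  Spec.map (CommRingCat.ofHom (HomogeneousLocalization.Away.lift (eval b) (X i)
    (by simpa using hb))) ≫ chart i

lemma chart_toSpec (i : Fin (n + 1)) : chart i ≫ toSpec k n =
    Spec.map (CommRingCat.ofHom ((HomogeneousLocalization.fromZeroRingHom 𝒜 _).comp
      (algebraMap k (𝒜 0)))) :=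
  (Proj.awayι_toSpecZero_assoc _ _ _ _ _).trans (Spec.map_comp _ _).symm

lemma ratPoint_toSpec (b : Fin (n + 1) → k) (i : Fin (n + 1)) (hb : b i ≠ 0) :
    ratPoint b i hb ≫ toSpec k n = 𝟙 (SpecBase k) := by
  rw [ratPoint, Category.assoc, chart_toSpec, ← Spec.map_comp, ← Spec.map_id]
  congr 1
  ext a
  change HomogeneousLocalization.Away.lift (eval b) (X i) (by simpa using hb)
    (HomogeneousLocalization.fromZeroRingHom _ _ (algebraMap k (𝒜 0) a)) = a
  rw [HomogeneousLocalization.Away.lift_fromZeroRingHom]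
  exact eval_C a

lemma exists_basicOpen_subset_of_dense (V : (ProjSpace k n).Opens)
    (hV : Dense (V : Set (ProjSpace k n))) :
    ∃ c : HomogeneousLocalization.NumDenSameDeg 𝒜 (.powers (X 0)),
      (c.num : MvPolynomial (Fin (n + 1)) k) ≠ 0 ∧
      (PrimeSpectrum.basicOpen (HomogeneousLocalization.mk c) :
        Set (PrimeSpectrum (HomogeneousLocalization.Away 𝒜 (X 0)))) ⊆
        (chart 0).base ⁻¹' (V : Set (ProjSpace k n)) := by
  have : Nontrivial (HomogeneousLocalization.Away 𝒜 (X 0)) :=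
    (HomogeneousLocalization.Away.lift (eval 1) (X 0) (by simp)).domain_nontrivial
  obtain ⟨_, ⟨x, rfl⟩, hxV⟩ := hV.inter_open_nonempty _
    (chart 0).isOpenEmbedding.isOpen_range (Set.range_nonempty _)
  obtain ⟨_, ⟨g, rfl⟩, hxg, hgV⟩ :=
    PrimeSpectrum.isTopologicalBasis_basic_opens.exists_subset_of_mem_open hxV
      (V.2.preimage (chart 0).continuous)
  obtain ⟨c, rfl⟩ := HomogeneousLocalization.mk_surjective g
  refine ⟨c, fun hc => hxg ?_, hgV⟩
  rw [HomogeneousLocalization.mk_eq_zero_of_num c (Subtype.ext hc)]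
  exact x.asIdeal.zero_mem

lemma exists_ratPoint_range_subset [Infinite k] (V : (ProjSpace k n).Opens)
    (hV : Dense (V : Set (ProjSpace k n))) :
    ∃ (b : Fin (n + 1) → k) (hb : b 0 ≠ 0), Set.range (ratPoint b 0 hb).base ⊆ V := by
  obtain ⟨c, hc, hcV⟩ := exists_basicOpen_subset_of_dense V hV
  obtain ⟨b, hb⟩ := exists_eval_ne_zero (mul_ne_zero (X_ne_zero 0) hc)
  rw [map_mul, eval_X] at hb
  have hb0 : b 0 ≠ 0 := left_ne_zero_of_mul hb
  refine ⟨b, hb0, ?_⟩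
  rintro _ ⟨pt, rfl⟩
  refine hcV (Spec_map_base_mem_basicOpen _ pt fun h0 => right_ne_zero_of_mul hb ?_)
  simpa [h0] using
    (HomogeneousLocalization.Away.lift_mk_mul_den (eval b) (X 0) (by simpa using hb0) c).symm

lemma hasRatPoint_of_dense [Infinite k] (V : (ProjSpace k n).Opens)
    (hV : Dense (V : Set (ProjSpace k n))) : HasRatPoint k V.toScheme (V.ι ≫ toSpec k n) := by
  obtain ⟨b, hb, hbV⟩ := exists_ratPoint_range_subset V hV
  refine ⟨IsOpenImmersion.lift V.ι (ratPoint b 0 hb) (by rwa [Scheme.Opens.range_ι]), ?_⟩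
  rw [IsOpenImmersion.lift_fac_assoc, ratPoint_toSpec]

end ProjSpace

theorem hasRatPoint_of_stablyRational_general (k : Type u) [Field k] [Infinite k]
    (X : Scheme.{u}) (sX : X ⟶ SpecBase k) (m : ℕ)
    (hsr : ∃ a : ℕ, BirationalOver k (pullback sX (ProjSpace.toSpec k a))
      (ProjSpace k (m + a))
      (pullback.fst sX (ProjSpace.toSpec k a) ≫ sX) (ProjSpace.toSpec k (m + a))) :
    HasRatPoint k X sX := by
  obtain ⟨a, U, V, e, -, hV, he⟩ := hsr
  have hU : HasRatPoint k U.toScheme (U.ι ≫ pullback.fst sX (ProjSpace.toSpec k a) ≫ sX) :=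
    (ProjSpace.hasRatPoint_of_dense V hV).of_hom e.inv (by rw [← he, Iso.inv_hom_id_assoc])
  exact hU.of_hom (U.ι ≫ pullback.fst _ _) (Category.assoc _ _ _)

/-- Let `X` be a smooth connected complete variety of dimension `m` over
an infinite field `k`.  If `X` is stably rational, i.e. there is an `a ≥ 0` such that
`X ×_k ℙᵃ_k` is birational to `ℙ^{m+a}_k` over `k`, then `X` has a `k`-rational point. -/
theorem hasRatPoint_of_stablyRational (k : Type u) [Field k] [Infinite k]
    (X : Scheme.{u}) (sX : X ⟶ SpecBase k) (m : ℕ)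
    (hred : IsReduced X) (hsmooth : IsSmooth sX) (hconn : ConnectedSpace X)
    (hproper : IsProper sX) (hdim : topologicalKrullDim X = (m : WithBot ℕ∞))
    (hsr : ∃ a : ℕ, BirationalOver k (pullback sX (ProjSpace.toSpec k a))
      (ProjSpace k (m + a))
      (pullback.fst sX (ProjSpace.toSpec k a) ≫ sX) (ProjSpace.toSpec k (m + a))) :
    HasRatPoint k X sX :=
  hasRatPoint_of_stablyRational_general k X sX m hsr
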